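/- arXiv:2103.02908 — 2 statements merged into one kernel-verified Lean document; each statement's English description precedes it below -/
import Mathlib

section
/- Let n = n_0 + n_1 + ⋯ + n_s with consecutive blocks I_0,…,I_s of sizes n_0,…,n_s in {1,…,n}, where n_j ≥ 2 for j = 1,…,s and n_0 ≥ 0. In so(n), let h := {X ∈ so(n) : X_ab = 0 unless a and b lie in the same block I_j for some j ≥ 1}. Then the Lie algebra normalizer {Y ∈ so(n) : [Y, X] ∈ h for all X ∈ h} equals the subalgebra of block-diagonal skew-symmetric matrices, i.e. {Y ∈ so(n) : Y_ab = 0 whenever a ∈ I_i, b ∈ I_j with i ≠ j}; equivalently, it equals k_0 ⊕ h where k_0 := {X ∈ so(n) : X_ab = 0 unless a, b ∈ I_0}. -/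
open Matrix

/-- Offset of the `j`-th block: `n_0 + ⋯ + n_{j-1}`. -/
def off (nn : ℕ → ℕ) (j : ℕ) : ℕ := ∑ i ∈ Finset.range j, nn i

/-- `a` (a 0-based index) lies in the block `I_j`. -/
def inBlock (nn : ℕ → ℕ) (j : ℕ) (a : ℕ) : Prop :=
  off nn j ≤ a ∧ a < off nn (j + 1)

/-!
Label every index by its block. Let `Y ∈ so(n)` normalize `h` and let `a`, `b` lie in different
blocks; by skew-symmetry we may assume `b ∈ I_j` with `j ≥ 1`. As `|I_j| ≥ 2` there is
`c ∈ I_j`, `c ≠ b`, and `E_bc - E_cb ∈ h`; the `(a, c)` entry of `⁅Y, E_bc - E_cb⁆` is `Y a b`,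
and it must vanish because `a ∉ I_j`. Conversely, multiplying by a block-diagonal matrix keeps
the support inside the same diagonal blocks, and a block-diagonal matrix splits into its
`I_0` rows plus the rest, which is the decomposition `k_0 ⊕ h`.
-/

namespace Matrix

section Support

variable {ι R : Type*}

lemma exists_ne_zero_of_mul_apply_ne_zero [Fintype ι] [NonUnitalNonAssocSemiring R]
    {A B : Matrix ι ι R} {a b : ι} (h : (A * B) a b ≠ 0) : ∃ c, A a c ≠ 0 ∧ B c b ≠ 0 := by
  obtain ⟨c, -, hc⟩ := Finset.exists_ne_zero_of_sum_ne_zero h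
  exact ⟨c, left_ne_zero_of_mul hc, right_ne_zero_of_mul hc⟩

variable [CommRing R]

lemma apply_eq_neg_apply_of_transpose_eq_neg {A : Matrix ι ι R} (hA : Aᵀ = -A) (a b : ι) :
    A b a = -A a b := by
  simpa using congr_fun₂ hA a b

variable [Fintype ι]

lemma lie_transpose_eq_neg {A B : Matrix ι ι R} (hA : Aᵀ = -A) (hB : Bᵀ = -B) :
    ⁅A, B⁆ᵀ = -⁅A, B⁆ := by
  rw [lie_transpose, hA, hB, Ring.lie_def, Ring.lie_def]
  noncomm_ring

lemma lie_single_sub_single_apply [DecidableEq ι] (Y : Matrix ι ι R) {a b c : ι}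
    (hab : a ≠ b) (hac : a ≠ c) (hbc : b ≠ c) :
    (⁅Y, single b c 1 - single c b 1⁆ : Matrix ι ι R) a c = Y a b := by
  simp [Ring.lie_def, mul_sub, sub_mul, hab, hac, hbc.symm]

end Support

section Blocks

variable {ι κ R : Type*} [CommRing R] (β : ι → κ)

/-- `⨁_{k ∈ S} so(β⁻¹' {k})` inside `so(ι)`. -/
def skewOnBlocks (S : Set κ) : Set (Matrix ι ι R) :=
  {X | Xᵀ = -X ∧ ∀ a b, X a b ≠ 0 → β a = β b ∧ β a ∈ S}

open Classical in
noncomputable def restrictBlocks (T : Set κ) (Y : Matrix ι ι R) : Matrix ι ι R :=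
  of fun a b => if β a ∈ T then Y a b else 0

variable {β}

lemma skewOnBlocks_eq_of_iff {S : Set κ} {P : ι → ι → Prop}
    (hP : ∀ a b, P a b ↔ β a = β b ∧ β a ∈ S) :
    {X : Matrix ι ι R | Xᵀ = -X ∧ ∀ a b, X a b ≠ 0 → P a b} = skewOnBlocks β S := by
  simp only [skewOnBlocks, hP]

lemma mem_skewOnBlocks_univ {Y : Matrix ι ι R} :
    Y ∈ skewOnBlocks β Set.univ ↔ Yᵀ = -Y ∧ ∀ a b, β a ≠ β b → Y a b = 0 := by
  simp only [skewOnBlocks, Set.mem_ofPred_eq, Set.mem_univ, and_true]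
  exact and_congr_right fun _ => forall₂_congr fun _ _ => not_imp_comm

lemma add_mem_skewOnBlocks_union {T S : Set κ} {K H : Matrix ι ι R}
    (hK : K ∈ skewOnBlocks β T) (hH : H ∈ skewOnBlocks β S) : K + H ∈ skewOnBlocks β (T ∪ S) := by
  refine ⟨by rw [transpose_add, hK.1, hH.1, neg_add], fun a b hab => ?_⟩
  by_cases hKab : K a b = 0
  · rw [add_apply, hKab, zero_add] at hab
    exact (hH.2 a b hab).imp_right Or.inr
  · exact (hK.2 a b hKab).imp_right Or.inl

lemma restrictBlocks_mem_skewOnBlocks {T S : Set κ} {Y : Matrix ι ι R}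
    (hY : Y ∈ skewOnBlocks β (T ∪ S)) : restrictBlocks β T Y ∈ skewOnBlocks β T := by
  classical
  refine ⟨?_, fun a b hab => ?_⟩
  · ext a b
    simp only [restrictBlocks, transpose_apply, neg_apply, of_apply,
      apply_eq_neg_apply_of_transpose_eq_neg hY.1 a b]
    by_cases hYab : Y a b = 0
    · simp [hYab]
    · rw [(hY.2 a b hYab).1]
      split_ifs <;> simp
  · simp only [restrictBlocks, of_apply, ne_eq, ite_eq_right_iff, not_forall] at hab
    obtain ⟨haT, hYab⟩ := hab
    exact ⟨(hY.2 a b hYab).1, haT⟩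

lemma sub_restrictBlocks_mem_skewOnBlocks {T S : Set κ} {Y : Matrix ι ι R}
    (hY : Y ∈ skewOnBlocks β (T ∪ S)) : Y - restrictBlocks β T Y ∈ skewOnBlocks β S := by
  classical
  refine ⟨?_, fun a b hab => ?_⟩
  · rw [transpose_sub, hY.1, (restrictBlocks_mem_skewOnBlocks hY).1, neg_sub_neg, neg_sub]
  · simp only [restrictBlocks, sub_apply, of_apply] at hab
    by_cases haT : β a ∈ T
    · simp [haT] at hab
    · rw [if_neg haT, sub_zero] at hab
      obtain ⟨hβab, haTS⟩ := hY.2 a b hab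
      exact ⟨hβab, haTS.resolve_left haT⟩

theorem skewOnBlocks_union (T S : Set κ) :
    skewOnBlocks β (T ∪ S) =
      {Y : Matrix ι ι R | ∃ K ∈ skewOnBlocks β T, ∃ H ∈ skewOnBlocks β S, Y = K + H} := by
  ext Y
  refine ⟨fun hY => ?_, fun ⟨K, hK, H, hH, hY⟩ => hY ▸ add_mem_skewOnBlocks_union hK hH⟩
  exact ⟨_, restrictBlocks_mem_skewOnBlocks hY, _, sub_restrictBlocks_mem_skewOnBlocks hY,
    (add_sub_cancel _ _).symm⟩

lemma single_sub_single_mem_skewOnBlocks [DecidableEq ι] {S : Set κ} {b c : ι}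
    (hbc : β b = β c) (hb : β b ∈ S) :
    single b c (1 : R) - single c b 1 ∈ skewOnBlocks β S := by
  refine ⟨by simp, fun p q hpq => ?_⟩
  by_cases h₁ : b = p ∧ c = q
  · obtain ⟨rfl, rfl⟩ := h₁
    exact ⟨hbc, hb⟩
  by_cases h₂ : c = p ∧ b = q
  · obtain ⟨rfl, rfl⟩ := h₂
    exact ⟨hbc.symm, hbc ▸ hb⟩
  simp [single_apply_of_ne _ _ _ _ _ h₁, single_apply_of_ne _ _ _ _ _ h₂] at hpq

variable [Fintype ι]

lemma lie_mem_skewOnBlocks {S : Set κ} {Y X : Matrix ι ι R} (hY : Y ∈ skewOnBlocks β Set.univ)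
    (hX : X ∈ skewOnBlocks β S) : ⁅Y, X⁆ ∈ skewOnBlocks β S := by
  refine ⟨lie_transpose_eq_neg hY.1 hX.1, fun a b hab => ?_⟩
  rw [Ring.lie_def, sub_apply] at hab
  by_cases hYX : (Y * X) a b = 0
  · rw [hYX, zero_sub, neg_ne_zero] at hab
    obtain ⟨c, hXac, hYcb⟩ := exists_ne_zero_of_mul_apply_ne_zero hab
    obtain ⟨hac, haS⟩ := hX.2 a c hXac
    exact ⟨hac.trans (hY.2 c b hYcb).1, haS⟩
  · obtain ⟨c, hYac, hXcb⟩ := exists_ne_zero_of_mul_apply_ne_zero hYX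
    obtain ⟨hcb, hcS⟩ := hX.2 c b hXcb
    have hac := (hY.2 a c hYac).1
    exact ⟨hac.trans hcb, hac ▸ hcS⟩

lemma apply_eq_zero_of_lie_mem_skewOnBlocks [DecidableEq ι] {S : Set κ} {Y : Matrix ι ι R}
    (hY : ∀ X ∈ (skewOnBlocks β S : Set (Matrix ι ι R)), ⁅Y, X⁆ ∈ skewOnBlocks β S)
    {a b c : ι} (hb : β b ∈ S) (hcb : c ≠ b) (hβc : β c = β b) (hab : β a ≠ β b) : Y a b = 0 := by
  by_contra hYab
  have hX := hY _ (single_sub_single_mem_skewOnBlocks (R := R) hβc.symm hb)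
  have hentry := lie_single_sub_single_apply Y (ne_of_apply_ne β hab)
    (ne_of_apply_ne β (hβc ▸ hab)) hcb.symm
  exact hab ((hX.2 a c (hentry ▸ hYab)).1.trans hβc)

theorem normalizer_skewOnBlocks [DecidableEq ι] {S : Set κ}
    (hS : ∀ b, β b ∈ S → ∃ c, c ≠ b ∧ β c = β b) (hSc : Sᶜ.Subsingleton) :
    {Y : Matrix ι ι R | Yᵀ = -Y ∧
        ∀ X ∈ (skewOnBlocks β S : Set (Matrix ι ι R)), ⁅Y, X⁆ ∈ skewOnBlocks β S} =
      skewOnBlocks β Set.univ := by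
  ext Y
  refine ⟨fun ⟨hYs, hY⟩ => mem_skewOnBlocks_univ.2 ⟨hYs, fun a b hab => ?_⟩,
    fun h => ⟨h.1, fun X hX => lie_mem_skewOnBlocks h hX⟩⟩
  by_cases hb : β b ∈ S
  · obtain ⟨c, hcb, hβc⟩ := hS b hb
    exact apply_eq_zero_of_lie_mem_skewOnBlocks hY hb hcb hβc hab
  · have ha : β a ∈ S := by_contra fun ha => hab (hSc ha hb)
    obtain ⟨c, hca, hβc⟩ := hS a ha
    rw [← neg_eq_zero, ← apply_eq_neg_apply_of_transpose_eq_neg hYs]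
    exact apply_eq_zero_of_lie_mem_skewOnBlocks hY ha hca hβc (Ne.symm hab)

end Blocks

end Matrix

lemma off_mono (nn : ℕ → ℕ) {i j : ℕ} (h : i ≤ j) : off nn i ≤ off nn j :=
  Finset.sum_le_sum_of_subset (Finset.range_subset_range.2 h)

lemma off_succ (nn : ℕ → ℕ) (j : ℕ) : off nn (j + 1) = off nn j + nn j :=
  Finset.sum_range_succ nn j

lemma inBlock_unique {nn : ℕ → ℕ} {i j a : ℕ} (hi : inBlock nn i a) (hj : inBlock nn j a) :
    i = j := by
  by_contra hij
  rcases Nat.lt_or_gt_of_ne hij with h | h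
  · exact absurd ((off_mono nn h).trans hj.1) (not_le.2 hi.2)
  · exact absurd ((off_mono nn h).trans hi.1) (not_le.2 hj.2)

lemma exists_inBlock (nn : ℕ → ℕ) {s a : ℕ} (ha : a < off nn (s + 1)) :
    ∃ j ≤ s, inBlock nn j a := by
  induction s with
  | zero => exact ⟨0, le_rfl, Nat.zero_le a, ha⟩
  | succ s ih =>
    by_cases h : a < off nn (s + 1)
    · obtain ⟨j, hj, hja⟩ := ih h
      exact ⟨j, hj.trans s.le_succ, hja⟩
    · exact ⟨s + 1, le_rfl, not_lt.1 h, ha⟩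

lemma exists_ne_inBlock {nn : ℕ → ℕ} {j : ℕ} (h2 : 2 ≤ nn j) (a : ℕ) :
    ∃ c ≠ a, inBlock nn j c := by
  have hsucc := off_succ nn j
  by_cases h : a = off nn j
  · exact ⟨off nn j + 1, by omega, by omega, by omega⟩
  · exact ⟨off nn j, h ∘ Eq.symm, le_rfl, by omega⟩

lemma exists_ne_fin_inBlock {nn : ℕ → ℕ} {s n j : ℕ} (hn : n = off nn (s + 1)) (hj : j ≤ s)
    (h2 : 2 ≤ nn j) (b : Fin n) : ∃ c ≠ b, inBlock nn j c := by
  obtain ⟨c, hcb, hc⟩ := exists_ne_inBlock h2 b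
  have hcn : c < n := hc.2.trans_le ((off_mono nn (Nat.succ_le_succ hj)).trans_eq hn.symm)
  exact ⟨⟨c, hcn⟩, Fin.ne_of_val_ne hcb, hc⟩

lemma exists_blockIndex (nn : ℕ → ℕ) {s n : ℕ} (hn : n = off nn (s + 1)) :
    ∃ β : Fin n → ℕ, (∀ a, β a ≤ s) ∧ ∀ j (a : Fin n), inBlock nn j a ↔ β a = j := by
  choose β hβs hβ using fun a : Fin n => exists_inBlock nn (a.isLt.trans_eq hn)
  exact ⟨β, hβs, fun j a => ⟨fun h => inBlock_unique (hβ a) h, fun h => h ▸ hβ a⟩⟩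

/-- in `so(n)`, the Lie algebra normalizer of the block-diagonally embedded
subalgebra `h = so(n_1) ⊕ ⋯ ⊕ so(n_s)` (with all `n_j ≥ 2`) is the subalgebra of
block-diagonal skew-symmetric matrices, which equals `k_0 ⊕ h` where `k_0 ≅ so(n_0)`. -/
theorem stmt_13 (s : ℕ) (nn : ℕ → ℕ) (n : ℕ)
    (hn : n = ∑ i ∈ Finset.range (s + 1), nn i)
    (hsize : ∀ j, 1 ≤ j → j ≤ s → 2 ≤ nn j) :
    let hSet : Set (Matrix (Fin n) (Fin n) ℝ) :=
      {X | Xᵀ = -X ∧ ∀ a b : Fin n, X a b ≠ 0 →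
        ∃ j, 1 ≤ j ∧ j ≤ s ∧ inBlock nn j (a : ℕ) ∧ inBlock nn j (b : ℕ)}
    let k0 : Set (Matrix (Fin n) (Fin n) ℝ) :=
      {X | Xᵀ = -X ∧ ∀ a b : Fin n, X a b ≠ 0 →
        inBlock nn 0 (a : ℕ) ∧ inBlock nn 0 (b : ℕ)}
    let blockDiag : Set (Matrix (Fin n) (Fin n) ℝ) :=
      {Y | Yᵀ = -Y ∧ ∀ (a b : Fin n) (i j : ℕ), i ≤ s → j ≤ s → i ≠ j →
        inBlock nn i (a : ℕ) → inBlock nn j (b : ℕ) → Y a b = 0}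
    ({Y | Yᵀ = -Y ∧ ∀ X ∈ hSet, ⁅Y, X⁆ ∈ hSet} = blockDiag) ∧
    (blockDiag = {Y | ∃ K ∈ k0, ∃ H ∈ hSet, Y = K + H}) := by
  intro hSet k0 blockDiag
  obtain ⟨β, hβs, hβ⟩ := exists_blockIndex nn hn
  have hh : hSet = skewOnBlocks β {j | 1 ≤ j} := by
    refine skewOnBlocks_eq_of_iff fun a b => ?_
    simp only [hβ, Set.mem_ofPred_eq]
    exact ⟨fun ⟨j, hj1, _, ha, hb⟩ => ⟨ha.trans hb.symm, ha ▸ hj1⟩,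
      fun ⟨hab, ha1⟩ => ⟨β a, ha1, hβs a, rfl, hab.symm⟩⟩
  have hk : k0 = skewOnBlocks β {0} := by
    refine skewOnBlocks_eq_of_iff fun a b => ?_
    simp only [hβ, Set.mem_singleton_iff]
    exact ⟨fun ⟨ha, hb⟩ => ⟨ha.trans hb.symm, ha⟩, fun ⟨hab, ha⟩ => ⟨ha, hab ▸ ha⟩⟩
  have hd : blockDiag = skewOnBlocks β Set.univ := by
    ext Y
    simp only [blockDiag, mem_skewOnBlocks_univ, Set.mem_ofPred_eq, hβ]
    exact and_congr_right fun _ => forall₂_congr fun a b =>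
      ⟨fun h hab => h _ _ (hβs a) (hβs b) hab rfl rfl, fun h _ _ _ _ hij ha hb => h (ha ▸ hb ▸ hij)⟩
  have hcover : ({0} ∪ {j | 1 ≤ j} : Set ℕ) = Set.univ := Set.eq_univ_of_forall Nat.eq_zero_or_pos
  rw [hh, hk, hd]
  refine ⟨normalizer_skewOnBlocks (fun b hb => ?_) ?_, hcover ▸ skewOnBlocks_union _ _⟩
  · obtain ⟨c, hcb, hc⟩ := exists_ne_fin_inBlock hn (hβs b) (hsize _ hb (hβs b)) b
    exact ⟨c, hcb, (hβ _ _).1 hc⟩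
  · exact Set.subsingleton_singleton.anti fun j hj => Nat.lt_one_iff.1 (not_le.1 hj)
end

section
/- Let n = n_0 + n_1 + ⋯ + n_s with consecutive blocks I_0,…,I_s of sizes n_0,…,n_s in {1,…,n}, where n_j ≥ 2 for j = 1,…,s and n_0 ≥ 0. In so(n), set h := {X ∈ so(n) : X_ab = 0 unless a, b lie in the same block I_j for some j ≥ 1} and m_ij := span{e_ab : a ∈ I_i, b ∈ I_j} for 0 ≤ i < j ≤ s. Let (i, j) and (l, m) be two distinct pairs with 0 ≤ i < j ≤ s and 0 ≤ l < m ≤ s, and suppose m_ij ≠ {0} and m_lm ≠ {0}. Then there is no linear isomorphism φ : m_ij → m_lm satisfying φ([a, X]) = [a, φ(X)] for all a ∈ h and X ∈ m_ij; that is, the submodules m_ij and m_lm are pairwise inequivalent as ad(h)-modules. -/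
open Matrix

/-- The matrix `e_ab := E_ab - E_ba`. -/
def eR (n : ℕ) (a b : Fin n) : Matrix (Fin n) (Fin n) ℝ :=
  Matrix.single a b 1 - Matrix.single b a 1

/-- so(n) as a submodule of the real `n × n` matrices. -/
def soSub (n : ℕ) : Submodule ℝ (Matrix (Fin n) (Fin n) ℝ) where
  carrier := {X | Xᵀ = -X}
  add_mem' := by
    intro a b ha hb
    simp only [Set.mem_setOf_eq] at *
    rw [Matrix.transpose_add, ha, hb, neg_add]
  zero_mem' := by simp
  smul_mem' := by
    intro r X hX
    simp only [Set.mem_setOf_eq] at *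
    rw [Matrix.transpose_smul, hX, smul_neg]

/-- The diagonal block `h_j := span{e_ab : a, b ∈ I_j, a < b}`. -/
def hBlock (n : ℕ) (nn : ℕ → ℕ) (j : ℕ) : Submodule ℝ (Matrix (Fin n) (Fin n) ℝ) :=
  Submodule.span ℝ {M | ∃ a b : Fin n,
    inBlock nn j (a : ℕ) ∧ inBlock nn j (b : ℕ) ∧ a < b ∧ M = eR n a b}

/-- The off-diagonal block `m_ij := span{e_ab : a ∈ I_i, b ∈ I_j}`. -/
def mBlock (n : ℕ) (nn : ℕ → ℕ) (i j : ℕ) : Submodule ℝ (Matrix (Fin n) (Fin n) ℝ) :=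
  Submodule.span ℝ {M | ∃ a b : Fin n,
    inBlock nn i (a : ℕ) ∧ inBlock nn j (b : ℕ) ∧ M = eR n a b}

/-! Choose a block `t ≥ 1` lying in exactly one of the pairs `{i, j}`, `{l, m}`; it exists
because the pairs differ and at most one of them contains the block `0`. Since `n_t ≥ 2` there
is a rotation `e_pq` with `p ≠ q` in `I_t`. It lies in `h` and acts nontrivially on the
off-diagonal block whose pair contains `t`, since `[e_pq, e_rp] = e_qr` for `r` in the partner
block; it annihilates the other off-diagonal block, since no index lies in the support of
both. An `ad(h)`-equivariant isomorphism transports annihilation by `ad(e_pq)` in both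
directions, a contradiction. -/

section Equivariance

variable {R L : Type*} [Semiring R] [AddCommMonoid L] [Module R L] [Bracket L L]
  {M N : Submodule R L}

def BracketEquivariantAt (φ : M ≃ₗ[R] N) (a : L) : Prop :=
  ∀ X : M, ∀ hmem : ⁅a, (X : L)⁆ ∈ M, (φ ⟨⁅a, (X : L)⁆, hmem⟩ : L) = ⁅a, (φ X : L)⁆

namespace BracketEquivariantAt

variable {φ : M ≃ₗ[R] N} {a : L}

theorem lie_eq_zero_of_forall_lie_target_eq_zero (hφ : BracketEquivariantAt φ a)
    (hN : ∀ Y ∈ N, ⁅a, Y⁆ = 0) {X : L} (hX : X ∈ M) (hmem : ⁅a, X⁆ ∈ M) : ⁅a, X⁆ = 0 := by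
  have hφ0 : φ ⟨⁅a, X⁆, hmem⟩ = 0 := Subtype.ext ((hφ ⟨X, hX⟩ hmem).trans (hN _ (φ _).2))
  simpa using congrArg Subtype.val ((LinearEquiv.map_eq_zero_iff φ).mp hφ0)

theorem lie_target_eq_zero_of_forall_lie_eq_zero (hφ : BracketEquivariantAt φ a)
    (hM : ∀ X ∈ M, ⁅a, X⁆ = 0) {Y : L} (hY : Y ∈ N) : ⁅a, Y⁆ = 0 := by
  set X := φ.symm ⟨Y, hY⟩
  have hX : ⁅a, (X : L)⁆ = 0 := hM X X.2
  have h := hφ X (hX ▸ M.zero_mem)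
  rw [LinearEquiv.apply_symm_apply] at h
  rw [← h]
  simp [hX]

end BracketEquivariantAt

end Equivariance

theorem Matrix.mul_eq_zero_of_forall_ne_zero {ι κ ν R : Type*} [Fintype κ]
    [NonUnitalNonAssocSemiring R] {A : Matrix ι κ R} {B : Matrix κ ν R}
    (h : ∀ x k y, A x k ≠ 0 → B k y ≠ 0 → False) : A * B = 0 := by
  ext x y
  refine Finset.sum_eq_zero fun k _ => ?_
  by_contra hk
  exact h x k y (left_ne_zero_of_mul hk) (right_ne_zero_of_mul hk)

lemma off_mono_s19 (nn : ℕ → ℕ) : Monotone (off nn) :=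
  fun _ _ hab => Finset.sum_le_sum_of_subset (Finset.range_subset_range.2 hab)

lemma inBlock_unique_s19 {nn : ℕ → ℕ} {t t' a : ℕ} (h : inBlock nn t a) (h' : inBlock nn t' a) :
    t = t' := by
  by_contra hne
  rcases Nat.lt_or_gt_of_ne hne with hlt | hlt
  · exact absurd (h.2.trans_le ((off_mono_s19 nn hlt).trans h'.1)) (lt_irrefl a)
  · exact absurd (h'.2.trans_le ((off_mono_s19 nn hlt).trans h.1)) (lt_irrefl a)

section Blocks

variable {n : ℕ} {nn : ℕ → ℕ}

lemma eR_apply (a b p q : Fin n) :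
    eR n a b p q = (if a = p ∧ b = q then (1 : ℝ) else 0) - (if b = p ∧ a = q then 1 else 0) := by
  simp [eR, Matrix.single]

lemma eR_swap (a b : Fin n) : eR n a b = -eR n b a := by
  simp only [eR, neg_sub]

lemma eR_transpose (a b : Fin n) : (eR n a b)ᵀ = -eR n a b := by
  simp [eR]

lemma eq_and_eq_or_eq_and_eq_of_eR_apply_ne_zero {a b p q : Fin n} (h : eR n a b p q ≠ 0) :
    (p = a ∧ q = b) ∨ (p = b ∧ q = a) := by
  rw [eR_apply] at h
  by_cases h1 : a = p ∧ b = q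
  · exact Or.inl ⟨h1.1.symm, h1.2.symm⟩
  by_cases h2 : b = p ∧ a = q
  · exact Or.inr ⟨h2.1.symm, h2.2.symm⟩
  simp [h1, h2] at h

lemma eR_ne_zero {a b : Fin n} (h : a ≠ b) : eR n a b ≠ 0 := by
  intro hz
  have := congrFun (congrFun hz a) b
  simp [eR_apply, h] at this

lemma lie_eR_eR {p q r : Fin n} (hpq : p ≠ q) (hrp : r ≠ p) (hrq : r ≠ q) :
    ⁅eR n p q, eR n r p⁆ = eR n q r := by
  rw [Ring.lie_def]
  simp only [eR, sub_mul, mul_sub]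
  rw [Matrix.single_mul_single_of_ne (c := 1) p q _ hrq.symm,
      Matrix.single_mul_single_of_ne (c := 1) p q _ hpq.symm,
      Matrix.single_mul_single_of_ne (c := 1) q p _ hrp.symm,
      Matrix.single_mul_single_same (c := 1) q p r 1,
      Matrix.single_mul_single_same (c := 1) r p q 1,
      Matrix.single_mul_single_of_ne (c := 1) r p _ hpq,
      Matrix.single_mul_single_of_ne (c := 1) p r _ hrp,
      Matrix.single_mul_single_of_ne (c := 1) p r _ hrq]
  simp

lemma inBlock_of_eR_apply_ne_zero {t : ℕ} {p q x y : Fin n} (hp : inBlock nn t p)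
    (hq : inBlock nn t q) (h : eR n p q x y ≠ 0) : inBlock nn t x ∧ inBlock nn t y := by
  rcases eq_and_eq_or_eq_and_eq_of_eR_apply_ne_zero h with ⟨rfl, rfl⟩ | ⟨rfl, rfl⟩
  exacts [⟨hp, hq⟩, ⟨hq, hp⟩]

lemma eR_mem_mBlock {i j : ℕ} {a b : Fin n}
    (h : (inBlock nn i a ∧ inBlock nn j b) ∨ (inBlock nn j a ∧ inBlock nn i b)) :
    eR n a b ∈ mBlock n nn i j := by
  rcases h with ⟨ha, hb⟩ | ⟨ha, hb⟩
  · exact Submodule.subset_span ⟨a, b, ha, hb, rfl⟩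
  · rw [eR_swap]
    exact neg_mem (Submodule.subset_span ⟨b, a, hb, ha, rfl⟩)

lemma inBlock_of_mem_mBlock {i j : ℕ} {X : Matrix (Fin n) (Fin n) ℝ}
    (hX : X ∈ mBlock n nn i j) {p q : Fin n} (h : X p q ≠ 0) :
    (inBlock nn i p ∧ inBlock nn j q) ∨ (inBlock nn j p ∧ inBlock nn i q) := by
  induction hX using Submodule.span_induction with
  | mem x hx =>
    obtain ⟨a, b, ha, hb, rfl⟩ := hx
    rcases eq_and_eq_or_eq_and_eq_of_eR_apply_ne_zero h with ⟨rfl, rfl⟩ | ⟨rfl, rfl⟩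
    exacts [Or.inl ⟨ha, hb⟩, Or.inr ⟨hb, ha⟩]
  | zero => simp at h
  | add x y _ _ ihx ihy =>
    by_cases hx0 : x p q = 0
    · exact ihy (by simpa [hx0] using h)
    · exact ihx hx0
  | smul c x _ ih => exact ih (right_ne_zero_of_mul h)

lemma exists_inBlock_of_mBlock_ne_bot {i j : ℕ} (h : mBlock n nn i j ≠ ⊥) :
    ∃ a b : Fin n, inBlock nn i a ∧ inBlock nn j b := by
  by_contra! hc
  refine h (Submodule.span_eq_bot.2 ?_)
  rintro M ⟨a, b, ha, hb, rfl⟩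
  exact absurd hb (hc a b ha)

lemma exists_ne_inBlock_s19 {s t : ℕ} (hn : n = ∑ i ∈ Finset.range (s + 1), nn i)
    (hts : t ≤ s) (ht : 2 ≤ nn t) :
    ∃ p q : Fin n, inBlock nn t p ∧ inBlock nn t q ∧ p ≠ q := by
  have hoff : off nn (t + 1) = off nn t + nn t := Finset.sum_range_succ nn t
  have hle : off nn (t + 1) ≤ n := hn ▸ off_mono_s19 nn (Nat.succ_le_succ hts)
  refine ⟨⟨off nn t, by omega⟩, ⟨off nn t + 1, by omega⟩, ?_, ?_, ?_⟩ <;>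
    simp only [inBlock, ne_eq, Fin.mk.injEq] <;> omega

lemma lie_eR_eq_zero_of_mem_mBlock {i j t : ℕ} {p q : Fin n} (hp : inBlock nn t p)
    (hq : inBlock nn t q) (hti : t ≠ i) (htj : t ≠ j) {X : Matrix (Fin n) (Fin n) ℝ}
    (hX : X ∈ mBlock n nn i j) : ⁅eR n p q, X⁆ = 0 := by
  have hdisj : ∀ {k x : Fin n}, inBlock nn t k → X k x ≠ 0 ∨ X x k ≠ 0 → False := by
    rintro k x hk (h | h) <;> rcases inBlock_of_mem_mBlock hX h with ⟨h1, h2⟩ | ⟨h1, h2⟩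
    exacts [hti (inBlock_unique_s19 hk h1), htj (inBlock_unique_s19 hk h1),
      htj (inBlock_unique_s19 hk h2), hti (inBlock_unique_s19 hk h2)]
  rw [Ring.lie_def,
    Matrix.mul_eq_zero_of_forall_ne_zero (A := eR n p q) (B := X) fun _ _ _ he hX =>
      hdisj (inBlock_of_eR_apply_ne_zero hp hq he).2 (Or.inl hX),
    Matrix.mul_eq_zero_of_forall_ne_zero (A := X) (B := eR n p q) fun _ _ _ hX he =>
      hdisj (inBlock_of_eR_apply_ne_zero hp hq he).1 (Or.inr hX),
    sub_zero]

lemma exists_lie_eR_mem_mBlock_ne_zero {i j t : ℕ} (hij : i ≠ j) (ht : t = i ∨ t = j)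
    (hne : mBlock n nn i j ≠ ⊥) {p q : Fin n} (hp : inBlock nn t p) (hq : inBlock nn t q)
    (hpq : p ≠ q) :
    ∃ X ∈ mBlock n nn i j, ⁅eR n p q, X⁆ ∈ mBlock n nn i j ∧ ⁅eR n p q, X⁆ ≠ 0 := by
  obtain ⟨a, b, ha, hb⟩ := exists_inBlock_of_mBlock_ne_bot hne
  obtain ⟨u, r, hr, hpair⟩ : ∃ u, ∃ r : Fin n, inBlock nn u r ∧
      ((t = i ∧ u = j) ∨ (t = j ∧ u = i)) := by
    rcases ht with rfl | rfl
    exacts [⟨j, b, hb, Or.inl ⟨rfl, rfl⟩⟩, ⟨i, a, ha, Or.inr ⟨rfl, rfl⟩⟩]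
  have hut : u ≠ t := by omega
  have hrp : r ≠ p := fun h => hut (inBlock_unique_s19 hr (h ▸ hp))
  have hrq : r ≠ q := fun h => hut (inBlock_unique_s19 hr (h ▸ hq))
  refine ⟨eR n r p, eR_mem_mBlock ?_, ?_⟩
  · rcases hpair with ⟨rfl, rfl⟩ | ⟨rfl, rfl⟩ <;> tauto
  rw [lie_eR_eR hpq hrp hrq]
  refine ⟨eR_mem_mBlock ?_, eR_ne_zero hrq.symm⟩
  rcases hpair with ⟨rfl, rfl⟩ | ⟨rfl, rfl⟩ <;> tauto

end Blocks

lemma exists_block_mem_one_pair {i j l m : ℕ} (hij : i < j) (hlm : l < m)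
    (hdist : (i, j) ≠ (l, m)) :
    ∃ t, 1 ≤ t ∧ t ≤ max j m ∧
      ((t = i ∨ t = j) ∧ t ≠ l ∧ t ≠ m ∨ (t = l ∨ t = m) ∧ t ≠ i ∧ t ≠ j) := by
  rw [Ne, Prod.mk.injEq] at hdist
  by_cases hjm : j = m
  · rcases Nat.eq_zero_or_pos i with hi | hi
    exacts [⟨l, by omega⟩, ⟨i, by omega⟩]
  · by_cases hjl : j = l
    exacts [⟨m, by omega⟩, ⟨j, by omega⟩]

/-- for distinct pairs `(i,j) ≠ (l,m)`, the nonzero `ad(h)`-submodules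
`m_ij` and `m_lm` of `so(n)` are inequivalent: there is no `ad(h)`-equivariant linear
isomorphism `m_ij → m_lm`, where `h` is the block-diagonally embedded
`so(n_1) ⊕ ⋯ ⊕ so(n_s)` (all `n_t ≥ 2`). -/
theorem stmt_19 (s : ℕ) (nn : ℕ → ℕ) (n : ℕ)
    (hn : n = ∑ i ∈ Finset.range (s + 1), nn i)
    (hsize : ∀ j, 1 ≤ j → j ≤ s → 2 ≤ nn j)
    (i j l m : ℕ) (hij : i < j) (hjs : j ≤ s) (hlm : l < m) (hms : m ≤ s)
    (hdist : (i, j) ≠ (l, m))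
    (hne1 : mBlock n nn i j ≠ ⊥) (hne2 : mBlock n nn l m ≠ ⊥) :
    ¬ ∃ φ : mBlock n nn i j ≃ₗ[ℝ] mBlock n nn l m,
      ∀ a : Matrix (Fin n) (Fin n) ℝ, aᵀ = -a →
        (∀ p q : Fin n, a p q ≠ 0 →
          ∃ t, 1 ≤ t ∧ t ≤ s ∧ inBlock nn t (p : ℕ) ∧ inBlock nn t (q : ℕ)) →
        ∀ X : mBlock n nn i j,
          ∀ hmem : ⁅a, (X : Matrix (Fin n) (Fin n) ℝ)⁆ ∈ mBlock n nn i j,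
            ((φ ⟨⁅a, (X : Matrix (Fin n) (Fin n) ℝ)⁆, hmem⟩ : mBlock n nn l m) :
                Matrix (Fin n) (Fin n) ℝ)
              = ⁅a, ((φ X : mBlock n nn l m) : Matrix (Fin n) (Fin n) ℝ)⁆ := by
  rintro ⟨φ, hφ⟩
  obtain ⟨t, ht1, htjm, ht⟩ := exists_block_mem_one_pair hij hlm hdist
  have hts : t ≤ s := htjm.trans (max_le hjs hms)
  obtain ⟨p, q, hp, hq, hpq⟩ := exists_ne_inBlock_s19 hn hts (hsize t ht1 hts)
  have hφpq : BracketEquivariantAt φ (eR n p q) := hφ _ (eR_transpose p q)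
    fun _ _ hxy => ⟨t, ht1, hts, inBlock_of_eR_apply_ne_zero hp hq hxy⟩
  rcases ht with ⟨htij, htl, htm⟩ | ⟨htlm, hti, htj⟩
  · obtain ⟨X, hX, hmem, hne⟩ := exists_lie_eR_mem_mBlock_ne_zero hij.ne htij hne1 hp hq hpq
    exact hne (hφpq.lie_eq_zero_of_forall_lie_target_eq_zero
      (fun _ hY => lie_eR_eq_zero_of_mem_mBlock hp hq htl htm hY) hX hmem)
  · obtain ⟨Y, hY, -, hne⟩ := exists_lie_eR_mem_mBlock_ne_zero hlm.ne htlm hne2 hp hq hpq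
    exact hne (hφpq.lie_target_eq_zero_of_forall_lie_eq_zero
      (fun _ hX => lie_eR_eq_zero_of_mem_mBlock hp hq hti htj hX) hY)
end
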